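/- arXiv:1603.07501 — 8 statements merged into one kernel-verified Lean document; each statement's English description precedes it below -/
import Mathlib

section
/- Let K be a compact Hausdorff space, M a compact metric space, and f : K → M a continuous map. If K admits a continuous surjection onto [0,1]^{ω₁}, then there exists t ∈ M such that the fiber f⁻¹({t}) admits a continuous surjection onto [0,1]^{ω₁}. -/
open MeasureTheory Set

/-- The index set of ordinals below `ω₁`. -/
abbrev Omega1 : Type 1 := {α : Ordinal // α < (Cardinal.aleph 1).ord}

/-- The Tychonoff cube `[0,1]^{ω₁}`. -/
abbrev Cube : Type 1 := Omega1 → Set.Icc (0:ℝ) 1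

/-!
Cover the compact image of `f` by finitely many `ε`-balls. The images under `g` of the
corresponding closed pieces of `K` cover the cube, so by Baire one of them contains a face of the
cube: a set of points with finitely many coordinates prescribed. Repeating inside that piece with
`ε → 0` gives a decreasing sequence of closed sets `L n ⊆ K` whose intersection lies in a single
fibre `f ⁻¹' {t}`, while each `g '' L n` contains a face. Only countably many coordinates are ever
prescribed, and the uncountable index set injects into the remaining ones; by Cantor's
intersection theorem every assignment of these free coordinates is realised by `g` on `⋂ n, L n`.
-/

open Function Metric Topology

section Face

variable {ι Y : Type*}

def face (S : Set ι) (p : ι → Y) : Set (ι → Y) := S.pi fun α => {p α}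

lemma mem_face_self (S : Set ι) (p : ι → Y) : p ∈ face S p := fun _ _ => rfl

lemma face_empty (p : ι → Y) : face ∅ p = univ := empty_pi _

lemma face_subset_face {S T : Set ι} {p q : ι → Y} (hST : S ⊆ T) (hq : q ∈ face S p) :
    face T q ⊆ face S p :=
  fun _ hx α hα => (hx α (hST hα)).trans (hq α hα)

lemma isClosed_face [TopologicalSpace Y] [T1Space Y] (S : Set ι) (p : ι → Y) :
    IsClosed (face S p) :=
  isClosed_set_pi fun _ _ => isClosed_singleton

lemma exists_mem_face_comp_eq {ι' : Type*} {S : Set ι} (p : ι → Y) {e : ι' → ι}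
    (he : Injective e) (hS : Disjoint S (range e)) (y : ι' → Y) :
    ∃ x ∈ face S p, x ∘ e = y :=
  ⟨extend e y p, fun _ hα => extend_apply' _ _ _ fun hr => hS.notMem_of_mem_left hα hr,
    extend_comp he y p⟩

/-- Baire category in the compact face: one of the closed sets has interior relative to the
face, and a basic open box around an interior point cuts out a smaller face. -/
lemma exists_face_subset_of_subset_iUnion [TopologicalSpace Y] [CompactSpace Y] [T2Space Y]
    {κ : Type*} [Finite κ] {C : κ → Set (ι → Y)} (hC : ∀ i, IsClosed (C i)) {S : Set ι}
    {p : ι → Y} (hcov : face S p ⊆ ⋃ i, C i) :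
    ∃ i, ∃ F : Finset ι, ∃ q, face (S ∪ F) q ⊆ C i := by
  set Q := face S p
  have : CompactSpace Q := isCompact_iff_compactSpace.mp (isClosed_face S p).isCompact
  have : Nonempty Q := ⟨⟨p, mem_face_self S p⟩⟩
  obtain ⟨i, q, hq⟩ := nonempty_interior_of_iUnion_of_closed
    (f := fun i => ((↑) ⁻¹' C i : Set Q)) (fun i => (hC i).preimage continuous_subtype_val)
    (eq_univ_of_forall fun x => by simpa using hcov x.2)
  have hCq : C i ∈ 𝓝[Q] (q : ι → Y) := Filter.mem_of_superset
    (mem_nhds_subtype_iff_nhdsWithin.1 (mem_interior_iff_mem_nhds.1 hq))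
    (image_preimage_subset _ _)
  obtain ⟨U, hU, hqU, hUC⟩ := mem_nhdsWithin.1 hCq
  obtain ⟨F, u, hu, hFU⟩ := isOpen_pi_iff.1 hU q hqU
  refine ⟨i, F, q, fun x hx => hUC ⟨hFU fun α hα => ?_,
    face_subset_face subset_union_left q.2 hx⟩⟩
  rw [hx α (Or.inr hα)]
  exact (hu α hα).2

end Face

section FaceCover

variable {ι Y K : Type*} [TopologicalSpace K]

structure FaceCover (g : K → ι → Y) where
  S : Set ι
  p : ι → Y
  L : Set K
  finite_S : S.Finite
  isClosed_L : IsClosed L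
  face_subset : face S p ⊆ g '' L

lemma FaceCover.nonempty_L {g : K → ι → Y} (c : FaceCover g) : c.L.Nonempty :=
  let ⟨k, hk, _⟩ := c.face_subset (mem_face_self c.S c.p); ⟨k, hk⟩

variable {M : Type*} [TopologicalSpace Y] [CompactSpace Y] [T2Space Y] [CompactSpace K]
  [MetricSpace M] {f : K → M} {g : K → ι → Y}

lemma exists_face_subset_image_inter_closedBall (hf : Continuous f) (hg : Continuous g)
    {L : Set K} (hL : IsClosed L) {S : Set ι} {p : ι → Y} (hSL : face S p ⊆ g '' L) {ε : ℝ}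
    (hε : 0 < ε) : ∃ F : Finset ι, ∃ q z, face (S ∪ F) q ⊆ g '' (L ∩ f ⁻¹' closedBall z ε) := by
  obtain ⟨T, -, hT, hcov⟩ := finite_cover_balls_of_compact (isCompact_range hf) hε
  have := hT.to_subtype
  obtain ⟨⟨z, _⟩, F, q, hq⟩ := exists_face_subset_of_subset_iUnion
    (C := fun z : T => g '' (L ∩ f ⁻¹' closedBall z ε))
    (fun z => ((hL.inter (isClosed_closedBall.preimage hf)).isCompact.image hg).isClosed)
    (fun x hx => by
      obtain ⟨k, hk, rfl⟩ := hSL hx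
      obtain ⟨z, hz, hkz⟩ := mem_iUnion₂.1 (hcov (mem_range_self k))
      exact mem_iUnion.2 ⟨⟨z, hz⟩, k, ⟨hk, ball_subset_closedBall hkz⟩, rfl⟩)
  exact ⟨F, q, z, hq⟩

lemma FaceCover.exists_small (hf : Continuous f) (hg : Continuous g) (c : FaceCover g)
    {ε : ℝ} (hε : 0 < ε) : ∃ c' : FaceCover g, c'.L ⊆ c.L ∧ ∃ z, c'.L ⊆ f ⁻¹' closedBall z ε := by
  obtain ⟨F, q, z, hq⟩ :=
    exists_face_subset_image_inter_closedBall hf hg c.isClosed_L c.face_subset hε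
  exact ⟨⟨c.S ∪ F, q, c.L ∩ f ⁻¹' closedBall z ε, c.finite_S.union F.finite_toSet,
    c.isClosed_L.inter (isClosed_closedBall.preimage hf), hq⟩, inter_subset_left, z,
    inter_subset_right⟩

lemma exists_antitone_faceCover [Nonempty Y] (hf : Continuous f) (hg : Continuous g)
    (hgs : Surjective g) :
    ∃ c : ℕ → FaceCover g, Antitone (fun n => (c n).L) ∧
      ∀ ε > 0, ∃ n z, (c n).L ⊆ f ⁻¹' closedBall z ε := by
  let c₀ : FaceCover g := ⟨∅, fun _ => Classical.arbitrary Y, univ, finite_empty, isClosed_univ,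
    by rw [face_empty, image_univ, hgs.range_eq]⟩
  choose next hnext hsmall using fun (n : ℕ) (c : FaceCover g) =>
    c.exists_small hf hg (Nat.one_div_pos_of_nat (α := ℝ) (n := n))
  let c : ℕ → FaceCover g := fun n => Nat.rec c₀ next n
  refine ⟨c, antitone_nat_of_succ_le fun n => hnext n (c n), fun ε hε => ?_⟩
  obtain ⟨n, hn⟩ := exists_nat_one_div_lt hε
  obtain ⟨z, hz⟩ := hsmall n (c n)
  exact ⟨n + 1, z, hz.trans (preimage_mono (closedBall_subset_closedBall hn.le))⟩

end FaceCover

lemma nonempty_iInter_inter_of_antitone {K : Type*} [TopologicalSpace K] [CompactSpace K]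
    {L : ℕ → Set K} (hL : Antitone L) (hLc : ∀ n, IsClosed (L n)) {T : Set K} (hT : IsClosed T)
    (hLT : ∀ n, (L n ∩ T).Nonempty) : ((⋂ n, L n) ∩ T).Nonempty := by
  rw [iInter_inter]
  exact IsCompact.nonempty_iInter_of_sequence_nonempty_isCompact_isClosed _
    (fun n => inter_subset_inter_left _ (hL n.le_succ)) hLT ((hLc 0).inter hT).isCompact
    fun n => (hLc n).inter hT

lemma exists_iInter_subset_preimage_singleton {ι K M : Type*} [MetricSpace M] {f : K → M}
    {L : ι → Set K} (hL : (⋂ n, L n).Nonempty)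
    (h : ∀ ε > 0, ∃ n z, L n ⊆ f ⁻¹' closedBall z ε) : ∃ t, ⋂ n, L n ⊆ f ⁻¹' {t} := by
  obtain ⟨k₀, hk₀⟩ := hL
  refine ⟨f k₀, fun k hk => eq_of_forall_dist_le fun ε hε => ?_⟩
  obtain ⟨n, z, hz⟩ := h (ε / 2) (half_pos hε)
  calc dist (f k) (f k₀) ≤ dist (f k) z + dist (f k₀) z := dist_triangle_right _ _ _
    _ ≤ ε / 2 + ε / 2 := add_le_add (hz (mem_iInter.1 hk n)) (hz (mem_iInter.1 hk₀ n))
    _ = ε := add_halves ε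

lemma Set.Countable.exists_injective_disjoint_range {ι : Type*} [Uncountable ι] {A : Set ι}
    (hA : A.Countable) : ∃ e : ι → ι, Injective e ∧ Disjoint A (range e) := by
  obtain ⟨φ⟩ := Cardinal.eq.1 <|
    Cardinal.mk_compl_of_infinite A (hA.le_aleph0.trans_lt Cardinal.aleph0_lt_mk)
  refine ⟨(↑) ∘ φ.symm, Subtype.val_injective.comp φ.symm.injective, ?_⟩
  rw [disjoint_right]
  rintro _ ⟨i, rfl⟩
  exact (φ.symm i).2

theorem exists_continuous_surjective_fiber_pi {ι Y K M : Type*} [Uncountable ι]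
    [TopologicalSpace Y] [CompactSpace Y] [T2Space Y] [Nonempty Y]
    [TopologicalSpace K] [CompactSpace K] [MetricSpace M] {f : K → M} (hf : Continuous f)
    {g : K → ι → Y} (hg : Continuous g) (hgs : Surjective g) :
    ∃ t : M, ∃ h : f ⁻¹' {t} → ι → Y, Continuous h ∧ Surjective h := by
  obtain ⟨c, hL, hsmall⟩ := exists_antitone_faceCover hf hg hgs
  have hLc n := (c n).isClosed_L
  obtain ⟨t, ht⟩ := exists_iInter_subset_preimage_singleton (by
    simpa using nonempty_iInter_inter_of_antitone hL hLc isClosed_univ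
      fun n => by simpa using (c n).nonempty_L) hsmall
  obtain ⟨e, he, hA⟩ :=
    (countable_iUnion fun n => (c n).finite_S.countable).exists_injective_disjoint_range
  refine ⟨t, fun k => g k ∘ e, by fun_prop, fun y => ?_⟩
  obtain ⟨k, hkL, hky⟩ := nonempty_iInter_inter_of_antitone hL hLc
    (T := {k | g k ∘ e = y}) (isClosed_eq (by fun_prop) continuous_const) fun n => by
      obtain ⟨x, hx, hxy⟩ := exists_mem_face_comp_eq (c n).p he
        (hA.mono_left (subset_iUnion (fun n => (c n).S) n)) y
      obtain ⟨k, hk, rfl⟩ := (c n).face_subset hx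
      exact ⟨k, hk, hxy⟩
  exact ⟨⟨k, ht hkL⟩, hky⟩

instance : Uncountable Omega1 := by
  rw [← Cardinal.aleph0_lt_mk_iff]
  have h : Cardinal.mk Omega1 = _ := Cardinal.mk_Iio_ordinal (Cardinal.aleph.{0} 1).ord
  rw [h, Cardinal.card_ord, Cardinal.lift_aleph]
  simp

theorem stmt0_general {K M : Type*} [TopologicalSpace K] [CompactSpace K]
    [MetricSpace M] (f : K → M) (hf : Continuous f)
    (g : K → Cube) (hg : Continuous g) (hgs : Function.Surjective g) :
    ∃ t : M, ∃ h : (f ⁻¹' {t}) → Cube,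
      Continuous h ∧ Function.Surjective h :=
  exists_continuous_surjective_fiber_pi hf hg hgs

theorem stmt0 {K M : Type*} [TopologicalSpace K] [CompactSpace K] [T2Space K]
    [MetricSpace M] [CompactSpace M] (f : K → M) (hf : Continuous f)
    (g : K → Cube) (hg : Continuous g) (hgs : Function.Surjective g) :
    ∃ t : M, ∃ h : (f ⁻¹' {t}) → Cube,
      Continuous h ∧ Function.Surjective h :=
  stmt0_general f hf g hg hgs
end

section
/- Let K be a compact space, f : K → 2^ω continuous, μ a Radon probability measure on K, and ν the pushforward measure ν(A) = μ(f⁻¹[A]) on 2^ω. For σ ∈ 2^{<ω} with μ(f⁻¹[[σ]]) > 0, let μ_σ(A) = μ(A ∩ f⁻¹[[σ]])/μ(f⁻¹[[σ]]). If A ⊆ K is measurable with μ(A) < ε, then the set H = {t ∈ 2^ω : μ_{t|n}(A) ≥ ε for infinitely many n} satisfies ν(H) < 1. -/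
open MeasureTheory Set

/-- The basic clopen cylinder `[t|n]` in Cantor space. -/
def Cyl (t : ℕ → Bool) (n : ℕ) : Set (ℕ → Bool) := {s | ∀ i < n, s i = t i}

lemma Cyl_measurable (t : ℕ → Bool) (n : ℕ) : MeasurableSet (Cyl t n) := by
  have : Cyl t n = ⋂ i ∈ Finset.range n, (fun s : ℕ → Bool => s i) ⁻¹' {t i} := by
    ext s; simp [Cyl]
  rw [this]
  exact MeasurableSet.biInter (Finset.range n).countable_toSet fun i _ =>
    (measurable_pi_apply i) (MeasurableSet.singleton _)

private def lcyl (σ : List Bool) : Set (ℕ → Bool) := Cyl (fun i => σ.getD i false) σ.length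

lemma lcyl_str (t : ℕ → Bool) (n : ℕ) : lcyl ((List.range n).map t) = Cyl t n := by
  ext u
  simp only [lcyl, Cyl, List.length_map, List.length_range, mem_setOf_eq]
  constructor <;> intro h i hi <;> have := h i hi <;>
    simpa [List.getD_eq_getElem?_getD, List.getElem?_range hi] using this

lemma str_take (t : ℕ → Bool) {n m : ℕ} (h : m ≤ n) :
    ((List.range n).map t).take m = (List.range m).map t := by
  rw [← List.map_take, List.take_range, Nat.min_eq_left h]

lemma prefix_of_agree (σ τ : List Bool) (hl : σ.length ≤ τ.length)
    (h : ∀ i < σ.length, σ.getD i false = τ.getD i false) : σ = τ.take σ.length := by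
  apply List.ext_getElem (by simp [hl])
  intro i h1 h2
  have := h i h1
  rw [List.getD_eq_getElem?_getD, List.getD_eq_getElem?_getD] at this
  simp_all [List.getElem?_eq_getElem, h1.trans_le hl]

theorem stmt3 {K : Type*} [TopologicalSpace K] [CompactSpace K] [T2Space K]
    [MeasurableSpace K] [BorelSpace K]
    (μ : Measure K) [IsProbabilityMeasure μ] [μ.Regular]
    (f : K → (ℕ → Bool)) (hf : Continuous f)
    (A : Set K) (hA : MeasurableSet A) (ε : ENNReal) (hAε : μ A < ε) :
    -- `H = {t : μ_{t|n}(A) ≥ ε for infinitely many n}`, where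
    -- `μ_{t|n}(A) ≥ ε` is expressed as `μ(A ∩ f⁻¹[[t|n]]) ≥ ε · μ(f⁻¹[[t|n]])`
    -- for cylinders of positive measure; `ν = μ ∘ f⁻¹` is the pushforward.
    (Measure.map f μ)
      {t : ℕ → Bool | ∃ᶠ n in Filter.atTop,
        μ (f ⁻¹' Cyl t n) ≠ 0 ∧ ε * μ (f ⁻¹' Cyl t n) ≤ μ (A ∩ f ⁻¹' Cyl t n)} < 1 := by
  classical
  -- "good" finite strings
  set G : List Bool → Prop := fun σ =>
    μ (f ⁻¹' lcyl σ) ≠ 0 ∧ ε * μ (f ⁻¹' lcyl σ) ≤ μ (A ∩ f ⁻¹' lcyl σ) with hG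
  -- minimal good strings
  set S : Set (List Bool) := {σ | G σ ∧ ∀ m < σ.length, ¬ G (σ.take m)} with hS
  have hmeasC : ∀ σ, MeasurableSet (f ⁻¹' lcyl σ) := fun σ =>
    (hf.measurable) (Cyl_measurable _ _)
  -- the H set is covered by minimal good cylinders
  have hcover : {t : ℕ → Bool | ∃ᶠ n in Filter.atTop,
      μ (f ⁻¹' Cyl t n) ≠ 0 ∧ ε * μ (f ⁻¹' Cyl t n) ≤ μ (A ∩ f ⁻¹' Cyl t n)} ⊆
      ⋃ σ ∈ S, lcyl σ := by
    intro t ht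
    obtain ⟨n, hn⟩ := ht.exists
    have hP : G ((List.range n).map t) := by
      rw [hG]; dsimp only
      rw [lcyl_str]
      exact hn
    have hex : ∃ m, G ((List.range m).map t) := ⟨n, hP⟩
    set n₀ := Nat.find hex with hn₀
    have hspec : G ((List.range n₀).map t) := Nat.find_spec hex
    refine mem_biUnion (?_ : (List.range n₀).map t ∈ S) ?_
    · refine ⟨hspec, fun m hm hGm => ?_⟩
      have hmlen : m < n₀ := by simpa using hm
      rw [str_take t hmlen.le] at hGm
      exact Nat.find_min hex hmlen hGm
    · rw [lcyl_str]
      exact fun i _ => rfl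
  -- minimal good cylinders are pairwise disjoint
  have haux : ∀ σ ∈ S, ∀ τ ∈ S, σ.length ≤ τ.length → ¬ Disjoint (lcyl σ) (lcyl τ) → σ = τ := by
    intro σ hσ τ hτ hl hnd
    obtain ⟨s, hs1, hs2⟩ := not_disjoint_iff.1 hnd
    have hpre : σ = τ.take σ.length := by
      apply prefix_of_agree σ τ hl
      intro i hi
      exact (hs1 i hi).symm.trans (hs2 i (hi.trans_le hl))
    rcases eq_or_lt_of_le hl with heq | hlt
    · rw [hpre, heq, List.take_length]
    · exact absurd (by rw [hpre] at hσ; exact hσ.1) (hτ.2 σ.length hlt)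
  have hdisj : S.PairwiseDisjoint lcyl := by
    intro σ hσ τ hτ hne
    by_contra hnd
    rcases le_total σ.length τ.length with h | h
    · exact hne (haux σ hσ τ hτ h hnd)
    · exact hne (haux τ hτ σ hσ h (fun h' => hnd h'.symm)).symm
  have hScount : S.Countable := S.to_countable
  -- bound ν H by the sum of cylinder measures
  have hνle : (Measure.map f μ) {t : ℕ → Bool | ∃ᶠ n in Filter.atTop,
      μ (f ⁻¹' Cyl t n) ≠ 0 ∧ ε * μ (f ⁻¹' Cyl t n) ≤ μ (A ∩ f ⁻¹' Cyl t n)} ≤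
      ∑' σ : S, μ (f ⁻¹' lcyl σ) := by
    calc _ ≤ (Measure.map f μ) (⋃ σ ∈ S, lcyl σ) := measure_mono hcover
    _ ≤ ∑' σ : S, (Measure.map f μ) (lcyl σ) := measure_biUnion_le _ hScount _
    _ = ∑' σ : S, μ (f ⁻¹' lcyl σ) :=
        tsum_congr fun σ => Measure.map_apply hf.measurable (Cyl_measurable _ _)
  have key : ε * ∑' σ : S, μ (f ⁻¹' lcyl σ) ≤ μ A := by
    rw [← ENNReal.tsum_mul_left]
    calc ∑' σ : S, ε * μ (f ⁻¹' lcyl σ) ≤ ∑' σ : S, μ (A ∩ f ⁻¹' lcyl σ) :=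
          ENNReal.tsum_le_tsum fun σ => σ.prop.1.2
    _ = μ (⋃ σ ∈ S, A ∩ f ⁻¹' lcyl σ) := by
        refine (measure_biUnion hScount ?_ fun σ _ => hA.inter (hmeasC σ)).symm
        intro σ hσ τ hτ hne
        exact ((hdisj hσ hτ hne).preimage f).mono inter_subset_right inter_subset_right
    _ ≤ μ A := measure_mono (iUnion₂_subset fun σ _ => inter_subset_left)
  have hT : ∑' σ : S, μ (f ⁻¹' lcyl σ) < 1 := by
    by_contra h
    push_neg at h
    have : ε ≤ μ A := le_trans (by simpa using mul_le_mul_right h ε) key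
    exact absurd hAε (not_lt.2 this)
  exact lt_of_le_of_lt hνle hT
end

section
/- Let K be a compact zerodimensional space, f : K → 2^ω continuous, and μ a Radon probability measure on K. If μ is almost determined by closed cylinders, i.e. μ(U) = sup{μ(f⁻¹[F]) : F ⊆ 2^ω closed, μ(f⁻¹[F] \ U) = 0} for every clopen U ⊆ K, then μ is separable. -/
open MeasureTheory Set

/-- A measure is separable if some countable family of measurable sets approximates it
in the symmetric-difference pseudometric. -/
def MeasureSeparable {K : Type*} [MeasurableSpace K] (μ : Measure K) : Prop :=
  ∃ E : Set (Set K), E.Countable ∧ (∀ B ∈ E, MeasurableSet B) ∧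
    ∀ A : Set K, MeasurableSet A → ∀ ε : ENNReal, 0 < ε → ∃ B ∈ E, μ (symmDiff A B) < ε

/-- In a compact Hausdorff totally disconnected space, any compact set inside an open set
can be separated by a clopen set. -/
lemma exists_isClopen_between {X : Type*} [TopologicalSpace X] [CompactSpace X] [T2Space X]
    [TotallyDisconnectedSpace X] {S V : Set X} (hS : IsCompact S) (hV : IsOpen V)
    (hSV : S ⊆ V) : ∃ C, IsClopen C ∧ S ⊆ C ∧ C ⊆ V := by
  have h : ∀ x : S, ∃ W, IsClopen W ∧ (x : X) ∈ W ∧ W ⊆ V := fun x =>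
    compact_exists_isClopen_in_isOpen hV (hSV x.2)
  choose W hWc hWx hWV using h
  obtain ⟨t, ht⟩ := hS.elim_finite_subcover W (fun x => (hWc x).2)
    (fun x hx => mem_iUnion.2 ⟨⟨x, hx⟩, hWx ⟨x, hx⟩⟩)
  exact ⟨⋃ x ∈ t, W x, isClopen_biUnion_finset fun x _ => hWc x, ht,
    iUnion₂_subset fun x _ => hWV x⟩

theorem stmt7 {K : Type*} [TopologicalSpace K] [CompactSpace K] [T2Space K]
    [TotallyDisconnectedSpace K] [MeasurableSpace K] [BorelSpace K]
    (μ : Measure K) [IsProbabilityMeasure μ] [μ.Regular]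
    (f : K → (ℕ → Bool)) (hf : Continuous f)
    -- `μ` is almost determined by closed cylinders:
    (hdet : ∀ U : Set K, IsClopen U →
      μ U = ⨆ (F : Set (ℕ → Bool)) (_ : IsClosed F) (_ : μ (f ⁻¹' F \ U) = 0),
        μ (f ⁻¹' F)) :
    MeasureSeparable μ := by
  classical
  -- the countable family: preimages of clopen subsets of Cantor space
  have hclopen_cnt : {C : Set (ℕ → Bool) | IsClopen C}.Countable := by
    have h1 : Countable (TopologicalSpace.Clopens (ℕ → Bool)) :=
      TopologicalSpace.Clopens.countable_iff_secondCountable.mpr inferInstance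
    have h2 : Countable {C : Set (ℕ → Bool) | IsClopen C} := by
      have hinj : Function.Injective
          (fun s : {C : Set (ℕ → Bool) // IsClopen C} =>
            (⟨s.1, s.2⟩ : TopologicalSpace.Clopens (ℕ → Bool))) := by
        intro a b h
        exact Subtype.ext (congrArg (fun c : TopologicalSpace.Clopens (ℕ → Bool) => c.1) h)
      exact hinj.countable
    exact Set.countable_coe_iff.mp h2
  refine ⟨(fun C => f ⁻¹' C) '' {C | IsClopen C}, hclopen_cnt.image _, ?_, ?_⟩
  · rintro B ⟨C, hC, rfl⟩
    exact (hC.2.preimage hf).measurableSet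
  intro A hA ε hε
  -- Step A: every clopen set of `K` can be approximated by preimages of clopens of Cantor space
  have stepA : ∀ U : Set K, IsClopen U → ∀ δ : ENNReal, 0 < δ →
      ∃ C : Set (ℕ → Bool), IsClopen C ∧ μ (symmDiff U (f ⁻¹' C)) < δ := by
    intro U hU δ hδ
    rcases eq_or_ne δ ⊤ with rfl | hδtop
    · exact ⟨∅, isClopen_empty, by simp⟩
    have hδ2 : (0 : ENNReal) < δ / 2 := ENNReal.half_pos hδ.ne'
    have hδ2top : δ / 2 ≠ ⊤ := (ENNReal.div_lt_top hδtop (by norm_num)).ne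
    -- find a closed set F almost inside U with measure close to μ U
    have hF : ∃ F : Set (ℕ → Bool), IsClosed F ∧ μ (f ⁻¹' F \ U) = 0 ∧
        μ U < μ (f ⁻¹' F) + δ / 2 := by
      by_contra hcon
      push_neg at hcon
      rcases eq_or_ne (μ U) 0 with h0 | h0
      · have h := hcon ∅ isClosed_empty (by simp)
        rw [Set.preimage_empty, measure_empty, zero_add, h0] at h
        exact absurd h hδ2.not_ge
      · have hle : (⨆ (F : Set (ℕ → Bool)) (_ : IsClosed F) (_ : μ (f ⁻¹' F \ U) = 0),
            μ (f ⁻¹' F)) ≤ μ U - δ / 2 := by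
          refine iSup₂_le fun F hF => iSup_le fun hnull => ?_
          exact ENNReal.le_sub_of_add_le_right hδ2top (hcon F hF hnull)
        rw [← hdet U hU] at hle
        have : μ U - δ / 2 < μ U :=
          ENNReal.sub_lt_self (measure_ne_top μ U) h0 hδ2.ne'
        exact absurd (hle.trans_lt this) (lt_irrefl _)
    obtain ⟨F, hFc, hFnull, hFμ⟩ := hF
    -- `f⁻¹ F ∩ U` has the same measure as `f⁻¹ F`
    have hFU : μ (f ⁻¹' F ∩ U) = μ (f ⁻¹' F) := by
      refine le_antisymm (measure_mono inter_subset_left) ?_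
      calc μ (f ⁻¹' F) ≤ μ (f ⁻¹' F ∩ U) + μ (f ⁻¹' F \ U) :=
            measure_le_inter_add_diff μ _ _
        _ = μ (f ⁻¹' F ∩ U) := by rw [hFnull, add_zero]
    have hFmeas : MeasurableSet (f ⁻¹' F ∩ U) :=
      ((hFc.measurableSet.preimage hf.measurable).inter hU.2.measurableSet)
    have hUdiff : μ (U \ f ⁻¹' F) < δ / 2 := by
      have h1 : μ (U \ (f ⁻¹' F ∩ U)) < δ / 2 := by
        refine measure_diff_lt_of_lt_add hFmeas.nullMeasurableSet inter_subset_right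
          (measure_ne_top μ _) ?_
        rwa [hFU]
      rwa [Set.diff_inter_self_eq_diff] at h1
    -- approximate `F` from outside by a clopen set of Cantor space, via the pushforward measure
    set ν : Measure (ℕ → Bool) := μ.map f with hν
    have : IsProbabilityMeasure ν := Measure.isProbabilityMeasure_map hf.measurable.aemeasurable
    obtain ⟨V, hFV, hVo, hVμ⟩ := F.exists_isOpen_lt_add (μ := ν) (measure_ne_top ν F) hδ2.ne'
    obtain ⟨C, hCclopen, hFC, hCV⟩ :=
      exists_isClopen_between (hFc.isCompact) hVo hFV
    have hCF : μ (f ⁻¹' C \ f ⁻¹' F) < δ / 2 := by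
      have hm : μ (f ⁻¹' C \ f ⁻¹' F) = ν (C \ F) := by
        rw [hν, Measure.map_apply hf.measurable
          (hCclopen.2.measurableSet.diff hFc.measurableSet), Set.preimage_diff]
      rw [hm]
      have hVF : ν (V \ F) < δ / 2 :=
        measure_diff_lt_of_lt_add hFc.measurableSet.nullMeasurableSet hFV
          (measure_ne_top ν F) hVμ
      exact (measure_mono (Set.diff_subset_diff_left hCV)).trans_lt hVF
    refine ⟨C, hCclopen, ?_⟩
    have htri : μ (symmDiff U (f ⁻¹' C)) ≤
        μ (symmDiff U (f ⁻¹' F)) + μ (symmDiff (f ⁻¹' F) (f ⁻¹' C)) :=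
      measure_symmDiff_le _ _ _
    have h1 : μ (symmDiff U (f ⁻¹' F)) < δ / 2 := by
      have : μ (symmDiff U (f ⁻¹' F)) ≤ μ (U \ f ⁻¹' F) + μ (f ⁻¹' F \ U) := by
        rw [symmDiff_def]
        exact measure_union_le _ _
      rw [hFnull, add_zero] at this
      exact this.trans_lt hUdiff
    have h2 : μ (symmDiff (f ⁻¹' F) (f ⁻¹' C)) < δ / 2 := by
      have hle : f ⁻¹' F ≤ f ⁻¹' C := fun x hx => hFC hx
      rw [symmDiff_of_le hle]
      exact hCF
    calc μ (symmDiff U (f ⁻¹' C)) ≤ _ := htri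
      _ < δ / 2 + δ / 2 := ENNReal.add_lt_add h1 h2
      _ = δ := ENNReal.add_halves δ
  -- Step B: every measurable set can be approximated by clopen sets of `K`
  have stepB : ∀ δ : ENNReal, 0 < δ → ∃ U : Set K, IsClopen U ∧ μ (symmDiff A U) < δ := by
    intro δ hδ
    have hδ2 : (0 : ENNReal) < δ / 2 := ENNReal.half_pos hδ.ne'
    obtain ⟨S, hSA, hScomp, hSμ⟩ := hA.exists_isCompact_diff_lt (measure_ne_top μ A) hδ2.ne'
    obtain ⟨V, hAV, hVo, -, hVμ⟩ := hA.exists_isOpen_diff_lt (measure_ne_top μ A) hδ2.ne'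
    obtain ⟨U, hUclopen, hSU, hUV⟩ := exists_isClopen_between hScomp hVo (hSA.trans hAV)
    refine ⟨U, hUclopen, ?_⟩
    have : μ (symmDiff A U) ≤ μ (A \ U) + μ (U \ A) := by
      rw [symmDiff_def]
      exact measure_union_le _ _
    refine this.trans_lt ?_
    have hAU : μ (A \ U) < δ / 2 :=
      (measure_mono (diff_subset_diff_right hSU)).trans_lt hSμ
    have hUA : μ (U \ A) < δ / 2 :=
      (measure_mono (diff_subset_diff_left hUV)).trans_lt hVμ
    calc μ (A \ U) + μ (U \ A) < δ / 2 + δ / 2 := ENNReal.add_lt_add hAU hUA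
      _ = δ := ENNReal.add_halves δ
  -- combine
  have hε2 : (0 : ENNReal) < ε / 2 := ENNReal.half_pos hε.ne'
  obtain ⟨U, hUclopen, hU⟩ := stepB (ε / 2) hε2
  obtain ⟨C, hCclopen, hC⟩ := stepA U hUclopen (ε / 2) hε2
  refine ⟨f ⁻¹' C, ⟨C, hCclopen, rfl⟩, ?_⟩
  calc μ (symmDiff A (f ⁻¹' C)) ≤ μ (symmDiff A U) + μ (symmDiff U (f ⁻¹' C)) :=
        measure_symmDiff_le _ _ _
    _ < ε / 2 + ε / 2 := ENNReal.add_lt_add hU hC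
    _ = ε := ENNReal.add_halves ε
end

section
/- Let K be a compact zerodimensional space, f : K → 2^ω continuous, and μ a Radon probability measure on K that is not almost determined by closed cylinders. Then there exists a clopen set C ⊆ K and a closed set F ⊆ 2^ω such that μ(f⁻¹[F]) > 0, and for every closed G ⊆ F with μ(f⁻¹[G]) > 0 one has both μ(f⁻¹[G] ∩ C) > 0 and μ(f⁻¹[G] \ C) > 0. -/
/-!
Push `μ` forward along `f` from `U` and from `Uᶜ`, getting measures `λ₁` and `λ₂` on `2^ω`. If
`λ₁ ⟂ λ₂`, inner regularity of `λ₁` by closed sets inside a `λ₂`-null carrier of `λ₁` shows that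
`μ U` is approximated by the closed cylinders `f⁻¹[F]` with `μ(f⁻¹[F] \ U) = 0`. So when `μ` is
not almost determined by closed cylinders, some clopen `U` has `λ₁` not singular to `λ₂`. Then the
Lebesgue decompositions of `λ₁` against `λ₂` and of `λ₂` against `λ₁` give a set `D` with
`λ₁ D > 0` on which `λ₁` and `λ₂` have the same null sets, and any closed `F ⊆ D` with
`λ₁ F > 0` works for `C = U`.
-/

open MeasureTheory Set

namespace MeasureTheory.Measure

variable {α : Type*} [MeasurableSpace α] {μ ν : Measure α}

theorem measure_eq_zero_of_subset_of_singularPart_eq_zero [μ.HaveLebesgueDecomposition ν]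
    {S G : Set α} (hS : μ.singularPart ν S = 0) (hGS : G ⊆ S) (hG : ν G = 0) : μ G = 0 := by
  rw [← singularPart_add_rnDeriv μ ν, coe_add, Pi.add_apply]
  exact add_eq_zero.2 ⟨measure_mono_null hGS hS, withDensity_absolutelyContinuous _ _ hG⟩

theorem exists_pos_forall_measure_eq_zero_iff_of_not_mutuallySingular
    [μ.HaveLebesgueDecomposition ν] [ν.HaveLebesgueDecomposition μ] (h : ¬ μ ⟂ₘ ν) :
    ∃ D, MeasurableSet D ∧ 0 < μ D ∧ ∀ G ⊆ D, (μ G = 0 ↔ ν G = 0) := by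
  obtain ⟨S₁, hS₁, hσ₁, hν₁⟩ := mutuallySingular_singularPart μ ν
  obtain ⟨S₂, hS₂, hσ₂, hμ₂⟩ := mutuallySingular_singularPart ν μ
  refine ⟨S₁ ∩ S₂, hS₁.inter hS₂, pos_iff_ne_zero.2 fun hD ↦ h ⟨S₁, hS₁, ?_, hν₁⟩,
    fun G hG ↦ ⟨?_, ?_⟩⟩
  · rw [← inter_union_compl S₁ S₂]
    exact measure_union_null hD (measure_mono_null inter_subset_right hμ₂)
  · exact measure_eq_zero_of_subset_of_singularPart_eq_zero hσ₂ (hG.trans inter_subset_right)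
  · exact measure_eq_zero_of_subset_of_singularPart_eq_zero hσ₁ (hG.trans inter_subset_left)

end MeasureTheory.Measure

section ClosedCylinders

variable {X Y : Type*} [MeasurableSpace X]

theorem iSup_measure_preimage_isClosed_le [TopologicalSpace Y] (μ : Measure X) (f : X → Y)
    (U : Set X) :
    ⨆ (F : Set Y) (_ : IsClosed F) (_ : μ (f ⁻¹' F \ U) = 0), μ (f ⁻¹' F) ≤ μ U := by
  refine iSup_le fun F ↦ iSup_le fun _ ↦ iSup_le fun hF ↦ ?_
  calc μ (f ⁻¹' F) ≤ μ (f ⁻¹' F ∩ U) + μ (f ⁻¹' F \ U) := measure_le_inter_add_sdiff μ _ _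
    _ = μ (f ⁻¹' F ∩ U) := by rw [hF, add_zero]
    _ ≤ μ U := measure_mono inter_subset_right

variable [MeasurableSpace Y] {μ : Measure X} {f : X → Y} {U : Set X}

theorem map_restrict_apply_of_measurable (hf : Measurable f) {G : Set Y} (hG : MeasurableSet G) :
    (μ.restrict U).map f G = μ (f ⁻¹' G ∩ U) := by
  rw [Measure.map_apply hf hG, Measure.restrict_apply (hf hG)]

variable [TopologicalSpace Y] [TopologicalSpace.PseudoMetrizableSpace Y] [BorelSpace Y]
  [IsFiniteMeasure μ]

theorem le_iSup_measure_preimage_isClosed_of_mutuallySingular (hf : Measurable f)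
    (h : (μ.restrict U).map f ⟂ₘ (μ.restrict Uᶜ).map f) :
    μ U ≤ ⨆ (F : Set Y) (_ : IsClosed F) (_ : μ (f ⁻¹' F \ U) = 0), μ (f ⁻¹' F) := by
  obtain ⟨S, hS, h₁S, h₂S⟩ := h
  have h₁Sc : (μ.restrict U).map f Sᶜ = μ U := by
    rw [measure_compl hS (measure_ne_top _ _), h₁S, tsub_zero,
      map_restrict_apply_of_measurable hf MeasurableSet.univ, preimage_univ, univ_inter]
  refine le_of_forall_lt fun r hr ↦ ?_
  obtain ⟨F, hFS, hF, hrF⟩ :=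
    hS.compl.exists_lt_isClosed_of_ne_top (measure_ne_top _ _) (h₁Sc ▸ hr)
  have hFU : μ (f ⁻¹' F \ U) = 0 := by
    rw [sdiff_eq, ← map_restrict_apply_of_measurable hf hF.measurableSet]
    exact measure_mono_null hFS h₂S
  rw [map_restrict_apply_of_measurable hf hF.measurableSet] at hrF
  exact lt_iSup_iff.2 ⟨F, lt_iSup_iff.2 ⟨hF, lt_iSup_iff.2
    ⟨hFU, hrF.trans_le (measure_mono inter_subset_left)⟩⟩⟩

theorem exists_isClosed_forall_measure_preimage_inter_pos_and_diff_pos (hf : Measurable f)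
    (hU : MeasurableSet U) (h : ¬ (μ.restrict U).map f ⟂ₘ (μ.restrict Uᶜ).map f) :
    ∃ F : Set Y, IsClosed F ∧ 0 < μ (f ⁻¹' F) ∧ ∀ G ⊆ F, MeasurableSet G →
      0 < μ (f ⁻¹' G) → 0 < μ (f ⁻¹' G ∩ U) ∧ 0 < μ (f ⁻¹' G \ U) := by
  obtain ⟨D, hD, hDpos, hnull⟩ :=
    Measure.exists_pos_forall_measure_eq_zero_iff_of_not_mutuallySingular h
  obtain ⟨F, hFD, hF, hFpos⟩ := hD.exists_lt_isClosed_of_ne_top (measure_ne_top _ _) hDpos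
  rw [map_restrict_apply_of_measurable hf hF.measurableSet] at hFpos
  refine ⟨F, hF, hFpos.trans_le (measure_mono inter_subset_left), fun G hGF hG hGpos ↦ ?_⟩
  have hiff := hnull G (hGF.trans hFD)
  rw [map_restrict_apply_of_measurable hf hG, map_restrict_apply_of_measurable hf hG, ← sdiff_eq]
    at hiff
  rw [← measure_inter_add_sdiff _ hU, pos_iff_ne_zero] at hGpos
  refine ⟨pos_iff_ne_zero.2 fun h₁ ↦ hGpos ?_, pos_iff_ne_zero.2 fun h₂ ↦ hGpos ?_⟩
  · rw [h₁, hiff.1 h₁, add_zero]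
  · rw [h₂, hiff.2 h₂, add_zero]

end ClosedCylinders

theorem stmt8_general {K : Type*} [TopologicalSpace K]
    [MeasurableSpace K] [BorelSpace K]
    (μ : Measure K) [IsProbabilityMeasure μ]
    (f : K → (ℕ → Bool)) (hf : Continuous f)
    -- `μ` is NOT almost determined by closed cylinders:
    (hnotdet : ¬ ∀ U : Set K, IsClopen U →
      μ U = ⨆ (F : Set (ℕ → Bool)) (_ : IsClosed F) (_ : μ (f ⁻¹' F \ U) = 0),
        μ (f ⁻¹' F)) :
    ∃ C : Set K, IsClopen C ∧ ∃ F : Set (ℕ → Bool), IsClosed F ∧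
      0 < μ (f ⁻¹' F) ∧
      ∀ G : Set (ℕ → Bool), G ⊆ F → IsClosed G → 0 < μ (f ⁻¹' G) →
        0 < μ (f ⁻¹' G ∩ C) ∧ 0 < μ (f ⁻¹' G \ C) := by
  push Not at hnotdet
  obtain ⟨U, hU, hne⟩ := hnotdet
  have hsing : ¬ (μ.restrict U).map f ⟂ₘ (μ.restrict Uᶜ).map f := fun h ↦
    hne ((le_iSup_measure_preimage_isClosed_of_mutuallySingular hf.measurable h).antisymm
      (iSup_measure_preimage_isClosed_le μ f U))
  obtain ⟨F, hF, hFpos, hsplit⟩ :=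
    exists_isClosed_forall_measure_preimage_inter_pos_and_diff_pos hf.measurable
      hU.isClosed.measurableSet hsing
  exact ⟨U, hU, F, hF, hFpos, fun G hGF hG ↦ hsplit G hGF hG.measurableSet⟩

theorem stmt8 {K : Type*} [TopologicalSpace K] [CompactSpace K] [T2Space K]
    [TotallyDisconnectedSpace K] [MeasurableSpace K] [BorelSpace K]
    (μ : Measure K) [IsProbabilityMeasure μ] [μ.Regular]
    (f : K → (ℕ → Bool)) (hf : Continuous f)
    -- `μ` is NOT almost determined by closed cylinders:
    (hnotdet : ¬ ∀ U : Set K, IsClopen U →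
      μ U = ⨆ (F : Set (ℕ → Bool)) (_ : IsClosed F) (_ : μ (f ⁻¹' F \ U) = 0),
        μ (f ⁻¹' F)) :
    ∃ C : Set K, IsClopen C ∧ ∃ F : Set (ℕ → Bool), IsClosed F ∧
      0 < μ (f ⁻¹' F) ∧
      ∀ G : Set (ℕ → Bool), G ⊆ F → IsClosed G → 0 < μ (f ⁻¹' G) →
        0 < μ (f ⁻¹' G ∩ C) ∧ 0 < μ (f ⁻¹' G \ C) :=
  stmt8_general μ f hf hnotdet
end

section
/- Let K be a compact zerodimensional Hausdorff space supporting a strictly positive Radon measure μ, and suppose f : K → 2^ω is a continuous finite-to-one map (every fiber f⁻¹({t}) is finite). Then K is separable. -/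
/-!
Suppose `K` is not separable. Every closed `C ⊆ K` contains a closed `G` that is minimal with
`f '' G = f '' C`; since `f '' G` is separable metrizable and the fibres are countable, `G` is
separable, so there is a countable `Φ C` such that every open set missing `Φ C` misses a point of
each fibre of `C`. Choose clopen sets `Vₙ` greedily, each avoiding `Φ` of all finite intersections
of earlier `Vᵢ` and of measure at least half the best possible. A clopen `W` avoiding all these
countably many sets competes at every stage, so `μ Vₙ ≥ μ W / 2 > 0` and some `x` lies in
infinitely many `Vₙ`. Each time `x` enters a new `Vₙ`, the fibre of `f x` acquires a new point
outside `Vₙ` but inside all earlier chosen sets, so that fibre is infinite.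
-/

open MeasureTheory Set Filter Topology TopologicalSpace Function
open scoped ENNReal

theorem exists_seq_forall_of_forall_exists {α : Type*} [Nonempty α]
    (P : ℕ → (ℕ → α) → α → Prop)
    (hP : ∀ n v w a, (∀ i < n, v i = w i) → P n v a → P n w a)
    (h : ∀ n v, ∃ a, P n v a) : ∃ v : ℕ → α, ∀ n, P n v (v n) := by
  choose g hg using h
  let hist : ℕ → ℕ → α := fun n =>
    Nat.rec (fun _ => Classical.arbitrary α) (fun m H => update H m (g m H)) n
  have hist_succ : ∀ n, hist (n + 1) = update (hist n) n (g n (hist n)) := fun n => rfl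
  have hist_eq : ∀ n i, i < n → hist n i = hist (i + 1) i := by
    intro n
    induction n with
    | zero => exact fun i hi => absurd hi (Nat.not_lt_zero i)
    | succ n ih =>
      intro i hi
      rcases Nat.lt_succ_iff_lt_or_eq.1 hi with hi | rfl
      · rw [hist_succ, update_of_ne hi.ne, ih i hi]
      · rfl
  refine ⟨fun n => hist (n + 1) n, fun n => hP n (hist n) _ _ (hist_eq n) ?_⟩
  show P n (hist n) (hist (n + 1) n)
  rw [hist_succ, update_self]
  exact hg n (hist n)

theorem MeasureTheory.le_measure_limsup_atTop {α : Type*} [MeasurableSpace α] {μ : Measure α}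
    [IsFiniteMeasure μ] {s : ℕ → Set α} (hs : ∀ n, NullMeasurableSet (s n) μ) {ε : ℝ≥0∞}
    (h : ∀ n, ε ≤ μ (s n)) : ε ≤ μ (limsup s atTop) := by
  have hanti : Antitone fun N => ⋃ n ≥ N, s n :=
    fun a b hab => biUnion_mono (fun n hn => hab.trans hn) fun _ _ => subset_rfl
  simp only [limsup_eq_iInf_iSup_of_nat, iInf_eq_iInter, iSup_eq_iUnion]
  rw [hanti.measure_iInter (fun N => .biUnion (to_countable _) fun n _ => hs n)
      ⟨0, measure_ne_top μ _⟩]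
  exact le_iInf fun N => (h N).trans (measure_mono (subset_iUnion₂_of_subset N le_rfl subset_rfl))

theorem ENNReal.exists_mem_forall_le_two_mul {α : Type*} {A : Set α} (hA : A.Nonempty)
    (g : α → ℝ≥0∞) (hg : ⨆ a ∈ A, g a ≠ ∞) : ∃ a ∈ A, ∀ b ∈ A, g b ≤ 2 * g a := by
  set s := ⨆ a ∈ A, g a
  have hle : ∀ b ∈ A, g b ≤ s := fun b hb => le_iSup₂ (f := fun a (_ : a ∈ A) => g a) b hb
  rcases eq_or_ne s 0 with hs | hs
  · obtain ⟨a, ha⟩ := hA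
    exact ⟨a, ha, fun b hb => ((hle b hb).trans_eq hs).trans zero_le⟩
  obtain ⟨a, ha, hsa⟩ := lt_biSup_iff.1 (ENNReal.half_lt_self hs hg)
  refine ⟨a, ha, fun b hb => (hle b hb).trans ?_⟩
  calc s = 2 * (s / 2) := (ENNReal.mul_div_cancel two_ne_zero ENNReal.ofNat_ne_top).symm
    _ ≤ 2 * g a := by gcongr

theorem exists_isClopen_nonempty_disjoint_of_not_dense {X : Type*} [TopologicalSpace X]
    [T2Space X] [CompactSpace X] [TotallyDisconnectedSpace X] {D : Set X} (hD : ¬Dense D) :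
    ∃ W, IsClopen W ∧ W.Nonempty ∧ Disjoint W D := by
  obtain ⟨x, hx⟩ := not_forall.1 hD
  obtain ⟨W, hW, hxW, hWD⟩ :=
    compact_exists_isClopen_in_isOpen isClosed_closure.isOpen_compl hx
  exact ⟨W, hW, ⟨x, hxW⟩, (subset_compl_iff_disjoint_right.1 hWD).mono_right subset_closure⟩

section CompactSource

variable {X Y : Type*} [TopologicalSpace X] [CompactSpace X] [TopologicalSpace Y] {f : X → Y}

theorem IsChain.mem_image_sInter [T1Space Y] (hf : Continuous f) {c : Set (Set X)}
    (hc : IsChain (· ⊆ ·) c) (hne : c.Nonempty) (hcl : ∀ G ∈ c, IsClosed G) {y : Y}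
    (hy : ∀ G ∈ c, y ∈ f '' G) : y ∈ f '' ⋂₀ c := by
  have : Nonempty c := hne.to_subtype
  have hfib : IsClosed (f ⁻¹' {y}) := isClosed_singleton.preimage hf
  obtain ⟨x, hx⟩ := IsCompact.nonempty_iInter_of_directed_nonempty_isCompact_isClosed
    (fun G : c => (G : Set X) ∩ f ⁻¹' {y})
    (fun G H => (hc.total G.2 H.2).elim (fun h => ⟨G, subset_rfl, inter_subset_inter_left _ h⟩)
      fun h => ⟨H, inter_subset_inter_left _ h, subset_rfl⟩)
    (fun G => (hy G G.2).imp fun _ hx => ⟨hx.1, hx.2⟩)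
    (fun G => ((hcl G G.2).inter hfib).isCompact) (fun G => (hcl G G.2).inter hfib)
  exact ⟨x, mem_sInter.2 fun G hG => (mem_iInter.1 hx ⟨G, hG⟩).1,
    (mem_iInter.1 hx (Classical.arbitrary c)).2⟩

theorem IsClosed.exists_minimal_image_eq [T1Space Y] (hf : Continuous f) {C : Set X}
    (hC : IsClosed C) : ∃ G ⊆ C, Minimal (fun G => IsClosed G ∧ f '' G = f '' C) G := by
  refine zorn_superset_nonempty {G | IsClosed G ∧ f '' G = f '' C}
    (fun c hcS hc ⟨G₀, hG₀⟩ => ?_) C ⟨hC, rfl⟩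
  have hsub : ⋂₀ c ⊆ G₀ := sInter_subset_of_mem hG₀
  refine ⟨⋂₀ c, ⟨isClosed_sInter fun G hG => (hcS hG).1, ?_⟩, fun G => sInter_subset_of_mem⟩
  refine ((image_mono hsub).trans_eq (hcS hG₀).2).antisymm fun y hy => ?_
  exact hc.mem_image_sInter hf ⟨G₀, hG₀⟩ (fun G hG => (hcS hG).1)
    fun G hG => (hcS hG).2 ▸ hy

theorem IsClosed.exists_isSeparable_subset_image_eq [MetrizableSpace Y] [SeparableSpace Y]
    (hf : Continuous f) (hfib : ∀ y, (f ⁻¹' {y}).Countable) {C : Set X} (hC : IsClosed C) :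
    ∃ G ⊆ C, f '' G = f '' C ∧ IsSeparable G := by
  obtain ⟨G, hGC, ⟨hG, hGim⟩, hGmin⟩ := hC.exists_minimal_image_eq hf
  obtain ⟨Q, hQG, hQc, hGQ⟩ :=
    (IsSeparable.of_separableSpace (f '' G)).exists_countable_dense_subset
  refine ⟨G, hGC, hGim, G ∩ f ⁻¹' Q, ?_, fun x hxG => mem_closure_iff.2 fun V hV hxV => ?_⟩
  · refine (hQc.biUnion fun q _ => hfib q).mono ?_
    rw [biUnion_preimage_singleton]
    exact inter_subset_right
  -- by minimality, `V` contains the whole `G`-fibre over some point of the open set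
  -- `f '' G \ f '' (G \ V)`, hence over a point of `Q`
  by_contra hVD
  have hsmall : f '' (G \ V) ≠ f '' G := fun h =>
    (hGmin ⟨hG.sdiff hV, h.trans hGim⟩ sdiff_subset hxG).2 hxV
  obtain ⟨t, htG, htV⟩ := not_subset.1 fun h => hsmall ((image_mono sdiff_subset).antisymm h)
  have hopen : IsOpen (f '' (G \ V))ᶜ :=
    ((hG.sdiff hV).isCompact.image hf).isClosed.isOpen_compl
  obtain ⟨q, hqV, hqQ⟩ := mem_closure_iff.1 (hGQ htG) _ hopen htV
  obtain ⟨y, hyG, rfl⟩ := hQG hqQ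
  exact hVD ⟨y, by_contra fun hyV => hqV ⟨y, ⟨hyG, hyV⟩, rfl⟩, hyG, hqQ⟩

theorem exists_countable_forall_exists_mem_closure [MetrizableSpace Y] [SeparableSpace Y]
    (hf : Continuous f) (hfib : ∀ y, (f ⁻¹' {y}).Countable) :
    ∃ Φ : Set X → Set X, (∀ C, (Φ C).Countable) ∧
      ∀ C, IsClosed C → ∀ x ∈ C, ∃ y ∈ C ∩ closure (Φ C), f y = f x := by
  have key : ∀ C : Set X, ∃ D : Set X, D.Countable ∧
      (IsClosed C → ∀ x ∈ C, ∃ y ∈ C ∩ closure D, f y = f x) := by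
    intro C
    by_cases hC : IsClosed C
    · obtain ⟨G, hGC, hGim, D, hDc, hGD⟩ := hC.exists_isSeparable_subset_image_eq hf hfib
      refine ⟨D, hDc, fun _ x hx => ?_⟩
      obtain ⟨y, hyG, hyx⟩ := hGim.symm ▸ mem_image_of_mem f hx
      exact ⟨y, ⟨hGC hyG, hGD hyG⟩, hyx⟩
    · exact ⟨∅, countable_empty, fun h => absurd h hC⟩
  choose Φ hΦc hΦ using key
  exact ⟨Φ, hΦc, hΦ⟩

end CompactSource

theorem infinite_preimage_of_frequently_mem {X Y : Type*} [TopologicalSpace X] {f : X → Y}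
    {Φ : Set X → Set X} (hΦ : ∀ C, IsClosed C → ∀ x ∈ C, ∃ y ∈ C ∩ closure (Φ C), f y = f x)
    {V : ℕ → Set X} (hV : ∀ n, IsClopen (V n))
    (hVΦ : ∀ n, ∀ S ⊆ Finset.range n, Disjoint (V n) (Φ (⋂ i ∈ S, V i)))
    {x : X} (hx : ∃ᶠ n in atTop, x ∈ V n) : (f ⁻¹' {f x}).Infinite := by
  obtain ⟨φ, hφ, hxφ⟩ := extraction_of_frequently_atTop hx
  set C : ℕ → Set X := fun k => ⋂ i ∈ (Finset.range (k + 1)).image φ, V i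
  have hC : ∀ k, IsClosed (C k) := fun k => isClosed_biInter fun i _ => (hV i).isClosed
  have hxC : ∀ k, x ∈ C k := fun k => mem_iInter₂.2 fun i hi => by
    obtain ⟨j, -, rfl⟩ := Finset.mem_image.1 hi
    exact hxφ j
  choose y hy hfy using fun k => hΦ (C k) (hC k) x (hxC k)
  have hy_notMem : ∀ k, y k ∉ V (φ (k + 1)) := by
    intro k hyV
    have hsub : (Finset.range (k + 1)).image φ ⊆ Finset.range (φ (k + 1)) := by
      intro i hi
      obtain ⟨j, hj, rfl⟩ := Finset.mem_image.1 hi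
      exact Finset.mem_range.2 (hφ (Finset.mem_range.1 hj))
    exact disjoint_left.1 (((hVΦ _ _ hsub).closure_right (hV _).isOpen)) hyV (hy k).2
  have hy_mem : ∀ k m, k < m → y m ∈ V (φ (k + 1)) := fun k m hkm =>
    mem_iInter₂.1 (hy m).1 _ (Finset.mem_image_of_mem φ (Finset.mem_range.2 (by omega)))
  exact infinite_of_injective_forall_mem
    (Injective.of_lt_imp_ne (f := y) fun k m hkm h => hy_notMem k (h ▸ hy_mem k m hkm)) hfy

theorem exists_seq_isClopen_disjoint_le_measure {K : Type*} [TopologicalSpace K]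
    [CompactSpace K] [T2Space K] [TotallyDisconnectedSpace K] [MeasurableSpace K]
    (μ : Measure K) [IsFiniteMeasure μ] (hpos : ∀ U : Set K, IsOpen U → U.Nonempty → 0 < μ U)
    (hK : ¬SeparableSpace K) {Φ : Set K → Set K} (hΦc : ∀ C, (Φ C).Countable) :
    ∃ V : ℕ → Set K, (∀ n, IsClopen (V n)) ∧
      (∀ n, ∀ S ⊆ Finset.range n, Disjoint (V n) (Φ (⋂ i ∈ S, V i))) ∧
      ∃ ε ≠ 0, ∀ n, ε ≤ μ (V n) := by
  let D : ℕ → (ℕ → Set K) → Set K := fun n V =>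
    ⋃ (S : Finset ℕ) (_ : S ⊆ Finset.range n), Φ (⋂ i ∈ S, V i)
  have hD : ∀ n V, (D n V).Countable := fun n V =>
    countable_iUnion fun _ => countable_iUnion fun _ => hΦc _
  let A : Set K → Set (Set K) := fun E => {W | IsClopen W ∧ W.Nonempty ∧ Disjoint W E}
  have hA : ∀ E : Set K, E.Countable → ∃ W ∈ A E, ∀ W' ∈ A E, μ W' ≤ 2 * μ W := fun E hE =>
    ENNReal.exists_mem_forall_le_two_mul
      (exists_isClopen_nonempty_disjoint_of_not_dense fun hd => hK ⟨E, hE, hd⟩) (μ ·)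
      (ne_top_of_le_ne_top (measure_ne_top μ univ)
        (iSup₂_le fun _ _ => measure_mono (subset_univ _)))
  obtain ⟨V, hV⟩ := exists_seq_forall_of_forall_exists
    (fun n V W => W ∈ A (D n V) ∧ ∀ W' ∈ A (D n V), μ W' ≤ 2 * μ W)
    (fun n v w a hvw hP => by
      have : D n v = D n w := iUnion₂_congr fun S hS => by
        rw [iInter₂_congr fun i hi => hvw i (Finset.mem_range.1 (hS hi))]
      simpa only [this] using hP)
    fun n V => hA _ (hD n V)
  obtain ⟨W, ⟨hW, hWne, hWD⟩, -⟩ := hA (⋃ n, D n V) (countable_iUnion fun n => hD n V)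
  refine ⟨V, fun n => (hV n).1.1, fun n S hS => (hV n).1.2.2.mono_right
    (subset_iUnion₂ (s := fun S (_ : S ⊆ Finset.range n) => Φ (⋂ i ∈ S, V i)) S hS),
    μ W / 2, (ENNReal.half_pos (hpos W hW.isOpen hWne).ne').ne', fun n => ?_⟩
  exact ENNReal.div_le_of_le_mul' <|
    (hV n).2 W ⟨hW, hWne, hWD.mono_right (subset_iUnion (D · V) n)⟩

theorem stmt10_general {K : Type*} [TopologicalSpace K] [CompactSpace K] [T2Space K]
    [TotallyDisconnectedSpace K] [MeasurableSpace K] [BorelSpace K]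
    (μ : Measure K) [IsProbabilityMeasure μ]
    -- `μ` is strictly positive:
    (hpos : ∀ U : Set K, IsOpen U → U.Nonempty → 0 < μ U)
    (f : K → (ℕ → Bool)) (hf : Continuous f)
    -- `f` is finite-to-one:
    (hfin : ∀ t : ℕ → Bool, (f ⁻¹' {t}).Finite) :
    TopologicalSpace.SeparableSpace K := by
  by_contra hsep
  obtain ⟨Φ, hΦc, hΦ⟩ :=
    exists_countable_forall_exists_mem_closure hf fun t => (hfin t).countable
  obtain ⟨V, hV, hVΦ, ε, hε, hεV⟩ := exists_seq_isClopen_disjoint_le_measure μ hpos hsep hΦc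
  obtain ⟨x, hx⟩ : (limsup V atTop).Nonempty := nonempty_of_measure_ne_zero <|
    ((pos_iff_ne_zero.2 hε).trans_le <| le_measure_limsup_atTop
      (fun n => (hV n).isOpen.measurableSet.nullMeasurableSet) hεV).ne'
  exact infinite_preimage_of_frequently_mem hΦ hV hVΦ (mem_limsup_iff_frequently_mem.1 hx)
    (hfin (f x))

theorem stmt10 {K : Type*} [TopologicalSpace K] [CompactSpace K] [T2Space K]
    [TotallyDisconnectedSpace K] [MeasurableSpace K] [BorelSpace K]
    (μ : Measure K) [IsProbabilityMeasure μ] [μ.Regular]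
    -- `μ` is strictly positive:
    (hpos : ∀ U : Set K, IsOpen U → U.Nonempty → 0 < μ U)
    (f : K → (ℕ → Bool)) (hf : Continuous f)
    -- `f` is finite-to-one:
    (hfin : ∀ t : ℕ → Bool, (f ⁻¹' {t}).Finite) :
    TopologicalSpace.SeparableSpace K :=
  stmt10_general μ hpos f hf hfin
end

section
/- Let K be a compact Hausdorff space, f : K → 2^ω continuous, and μ a Radon probability measure on K determined by closed cylinders. Then the support of μ is separable. -/
open MeasureTheory Set TopologicalSpace

/-!
A point of the support has neighbourhoods of positive measure only; since `μ` is determined by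
closed cylinders, each such neighbourhood `U` contains `f⁻¹' F` of positive measure for a closed
`F`, and because `2^ω` is a Stone space, `F` can be enlarged to a clopen `C` with `f⁻¹' C ⊆ U`.
The compact set `f⁻¹' C` then meets the support. There are only countably many clopens, so
choosing one point of the support in each `f⁻¹' C` that meets it gives a countable dense set.
-/

theorem TopologicalSpace.isSeparable_of_forall_exists_subset {α ι : Type*} [TopologicalSpace α]
    [Countable ι] {s : Set α} (C : ι → Set α)
    (h : ∀ x ∈ s, ∀ U, IsOpen U → x ∈ U → ∃ i, C i ⊆ U ∧ (C i ∩ s).Nonempty) :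
    IsSeparable s := by
  refine ⟨range fun i : {i // (C i ∩ s).Nonempty} ↦ i.2.some, countable_range _, fun x hx ↦ ?_⟩
  refine mem_closure_iff.2 fun U hU hxU ↦ ?_
  obtain ⟨i, hiU, hi⟩ := h x hx U hU hxU
  exact ⟨hi.some, hiU hi.some_mem.1, ⟨i, hi⟩, rfl⟩

theorem MeasureTheory.Measure.nonempty_inter_support_of_isCompact {X : Type*} [TopologicalSpace X]
    [MeasurableSpace X] {μ : Measure X} {s : Set X} (hs : IsCompact s) (hμ : 0 < μ s) :
    (s ∩ μ.support).Nonempty := by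
  by_contra h
  refine hμ.ne' (Measure.measure_eq_zero_of_isCompact_subset_compl_support hs fun x hx hxμ ↦ ?_)
  exact h ⟨x, hx, hxμ⟩

theorem exists_isClopen_superset_preimage_subset {K X : Type*} [TopologicalSpace K]
    [CompactSpace K] [TopologicalSpace X] [CompactSpace X] [T2Space X]
    [TotallyDisconnectedSpace X] {f : K → X} (hf : Continuous f) {F : Set X} {U : Set K}
    (hF : IsClosed F) (hU : IsOpen U) (hFU : f ⁻¹' F ⊆ U) :
    ∃ C, IsClopen C ∧ F ⊆ C ∧ f ⁻¹' C ⊆ U := by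
  have himage : IsClosed (f '' Uᶜ) := (hU.isClosed_compl.isCompact.image hf).isClosed
  have hdisj : F ⊆ (f '' Uᶜ)ᶜ := by
    rintro _ hy ⟨x, hxU, rfl⟩
    exact hxU (hFU hy)
  obtain ⟨C, hC, hFC, hCU⟩ := exists_clopen_of_closed_subset_open hF himage.isOpen_compl hdisj
  refine ⟨C, hC, hFC, fun x hx ↦ ?_⟩
  by_contra hxU
  exact hCU hx ⟨x, hxU, rfl⟩

theorem stmt13_general {K : Type*} [TopologicalSpace K] [CompactSpace K]
    [MeasurableSpace K]
    (μ : Measure K)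
    (f : K → (ℕ → Bool)) (hf : Continuous f)
    -- `μ` is determined by closed cylinders:
    (hdet : ∀ U : Set K, IsOpen U →
      μ U = ⨆ (F : Set (ℕ → Bool)) (_ : IsClosed F) (_ : f ⁻¹' F ⊆ U), μ (f ⁻¹' F)) :
    -- the support of `μ` is separable:
    TopologicalSpace.IsSeparable
      {x : K | ∀ U : Set K, IsOpen U → x ∈ U → 0 < μ U} := by
  have hsupport : {x : K | ∀ U : Set K, IsOpen U → x ∈ U → 0 < μ U} = μ.support := by
    rw [Measure.support_eq_forall_isOpen]
    exact ext fun _ ↦ forall_congr' fun _ ↦ Imp.swap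
  have : Countable (Clopens (ℕ → Bool)) := Clopens.countable_iff_secondCountable.2 inferInstance
  rw [hsupport]
  refine isSeparable_of_forall_exists_subset (fun C : Clopens (ℕ → Bool) ↦ f ⁻¹' C) ?_
  intro x hx U hU hxU
  obtain ⟨F, hF, hFU, hFpos⟩ : ∃ F, IsClosed F ∧ f ⁻¹' F ⊆ U ∧ 0 < μ (f ⁻¹' F) := by
    simpa only [hdet U hU, lt_iSup_iff, exists_prop] using
      (Measure.mem_support_iff_forall x).1 hx U (hU.mem_nhds hxU)
  obtain ⟨C, hC, hFC, hCU⟩ := exists_isClopen_superset_preimage_subset hf hF hU hFU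
  refine ⟨⟨C, hC⟩, hCU, Measure.nonempty_inter_support_of_isCompact ?_ ?_⟩
  · exact (hC.isClosed.preimage hf).isCompact
  · exact hFpos.trans_le (measure_mono (preimage_mono hFC))

theorem stmt13 {K : Type*} [TopologicalSpace K] [CompactSpace K] [T2Space K]
    [MeasurableSpace K] [BorelSpace K]
    (μ : Measure K) [IsProbabilityMeasure μ] [μ.Regular]
    (f : K → (ℕ → Bool)) (hf : Continuous f)
    -- `μ` is determined by closed cylinders:
    (hdet : ∀ U : Set K, IsOpen U →
      μ U = ⨆ (F : Set (ℕ → Bool)) (_ : IsClosed F) (_ : f ⁻¹' F ⊆ U), μ (f ⁻¹' F)) :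
    -- the support of `μ` is separable:
    TopologicalSpace.IsSeparable
      {x : K | ∀ U : Set K, IsOpen U → x ∈ U → 0 < μ U} :=
  stmt13_general μ f hf hdet
end

section
/- Let μ be a Radon probability measure on a compact zerodimensional space K and f : K → 2^ω continuous with pushforward ν = μ ∘ f⁻¹. Suppose for each clopen A with μ(A) > 0 the conditional measures μ_σ are defined on cylinders of positive measure. For any t ∈ 2^ω with ν({s : s|n = t|n}) > 0 for all n, any weak* accumulation point μ_t of the sequence (μ_{t|n})_n satisfies μ_t(f⁻¹({t})) = 1. -/
open MeasureTheory Set Filter Topology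

theorem Cyl_isClopen (t : ℕ → Bool) (n : ℕ) : IsClopen (Cyl t n) := by
  have : Cyl t n = ⋂ i ∈ Finset.range n, {s : ℕ → Bool | s i = t i} := by
    ext s; simp [Cyl]
  rw [this]
  apply Set.Finite.isClopen_biInter (Finset.range n).finite_toSet
  intro i _
  have : {s : ℕ → Bool | s i = t i} = (fun s : ℕ → Bool => s i) ⁻¹' {t i} := rfl
  rw [this]
  exact (isClopen_discrete {t i}).preimage (continuous_apply i)

/-- Indicator of a clopen set as a bounded continuous `ℝ≥0`-valued function. -/
noncomputable def clopenInd {α : Type*} [TopologicalSpace α] (s : Set α) (hs : IsClopen s) :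
    BoundedContinuousFunction α NNReal where
  toFun := s.indicator 1
  continuous_toFun := continuous_indicator (by simp [hs]) <| continuous_const.continuousOn
  map_bounded' := ⟨1, fun x y ↦ by by_cases hx : x ∈ s <;> by_cases hy : y ∈ s <;>
    simp [Set.indicator, hx, hy, NNReal.dist_eq]⟩

theorem clopenInd_apply {α : Type*} [TopologicalSpace α] (s : Set α) (hs : IsClopen s) (x : α) :
    clopenInd s hs x = s.indicator 1 x := rfl

theorem stmt15 {K : Type*} [TopologicalSpace K] [CompactSpace K] [T2Space K]
    [TotallyDisconnectedSpace K] [MeasurableSpace K] [BorelSpace K]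
    (μ : Measure K) [IsProbabilityMeasure μ] [μ.Regular]
    (f : K → (ℕ → Bool)) (hf : Continuous f) (t : ℕ → Bool)
    -- every cylinder around `t` has positive `ν`-measure:
    (hpos : ∀ n : ℕ, 0 < μ (f ⁻¹' Cyl t n))
    -- the conditional measures `μ_{t|n}`:
    (μs : ℕ → ProbabilityMeasure K)
    (hμs : ∀ (n : ℕ) (A : Set K), MeasurableSet A →
      (μs n : Measure K) A = μ (A ∩ f ⁻¹' Cyl t n) / μ (f ⁻¹' Cyl t n))
    -- `μ_t` is a weak* accumulation point of the sequence `(μ_{t|n})_n`: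
    (μt : ProbabilityMeasure K) (hacc : MapClusterPt μt atTop μs) :
    (μt : Measure K) (f ⁻¹' {t}) = 1 := by
  set C : ℕ → Set K := fun n => f ⁻¹' Cyl t n with hC
  have hclopen : ∀ n, IsClopen (C n) := fun n => (Cyl_isClopen t n).preimage hf
  have hmeas : ∀ n, MeasurableSet (C n) := fun n => (hclopen n).isClosed.measurableSet
  -- each μs m gives measure 1 to C n for m ≥ n
  have hfull : ∀ n m, n ≤ m → (μs m : Measure K) (C n) = 1 := by
    intro n m hnm
    have hsub : Cyl t m ⊆ Cyl t n := fun s hs i hi => hs i (lt_of_lt_of_le hi hnm)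
    rw [hμs m _ (hmeas n)]
    have : C n ∩ f ⁻¹' Cyl t m = f ⁻¹' Cyl t m := by
      rw [inter_eq_right]; exact preimage_mono hsub
    rw [this]
    exact ENNReal.div_self (hpos m).ne' (measure_ne_top μ _)
  obtain ⟨U, hUle, hT⟩ := mapClusterPt_iff_ultrafilter.mp hacc
  -- lintegral of the indicator is the measure
  have hlint : ∀ (n : ℕ) (ρ : ProbabilityMeasure K),
      ∫⁻ ω, (clopenInd (C n) (hclopen n)) ω ∂(ρ : Measure K) = (ρ : Measure K) (C n) := by
    intro n ρ
    have : (fun ω => ((clopenInd (C n) (hclopen n)) ω : ENNReal))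
        = (C n).indicator (fun _ => (1 : ENNReal)) := by
      funext ω
      by_cases hω : ω ∈ C n <;> simp [clopenInd_apply, Set.indicator, hω]
    rw [this, lintegral_indicator (hmeas n), setLIntegral_one]
  have key : ∀ n, (μt : Measure K) (C n) = 1 := by
    intro n
    have htend := (ProbabilityMeasure.tendsto_iff_forall_lintegral_tendsto.mp hT)
      (clopenInd (C n) (hclopen n))
    rw [hlint n μt] at htend
    have hev : ∀ᶠ m in (U : Filter ℕ),
        (fun m => ∫⁻ ω, (clopenInd (C n) (hclopen n)) ω ∂(μs m : Measure K)) m = 1 := by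
      filter_upwards [hUle (eventually_ge_atTop n)] with m hm
      rw [hlint n (μs m), hfull n m hm]
    have : Tendsto (fun m => ∫⁻ ω, (clopenInd (C n) (hclopen n)) ω ∂(μs m : Measure K))
        (U : Filter ℕ) (𝓝 1) := by
      rw [tendsto_congr' hev]; exact tendsto_const_nhds
    exact tendsto_nhds_unique htend this
  have heq : f ⁻¹' {t} = ⋂ n, C n := by
    ext x
    simp only [mem_preimage, mem_singleton_iff, mem_iInter, hC, Cyl, mem_setOf_eq]
    constructor
    · rintro rfl; intro n i _; rfl
    · intro h; funext i; exact h (i + 1) i (Nat.lt_succ_self i)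
  rw [heq]
  have hnull : (μt : Measure K) (⋂ n, C n)ᶜ = 0 := by
    rw [compl_iInter]
    exact measure_iUnion_null fun n => (prob_compl_eq_zero_iff (hmeas n)).mpr (key n)
  exact (prob_compl_eq_zero_iff (MeasurableSet.iInter fun n => hmeas n)).mp hnull
end

section
/- Let K be a compact zerodimensional space and suppose {B_τ : τ ∈ 2^{<ω}} is a family of clopen subsets of K and (F_n)_n a decreasing sequence of closed subsets of 2^ω with diam(F_n) → 0 and ⋂_n F_n = {t}, such that for a continuous f : K → 2^ω: (1) B_τ ∩ f⁻¹[F_n] ⊆ B_σ ∩ f⁻¹[F_n] whenever σ ⊆ τ ∈ 2^n; (2) B_{τ⌢0} ∩ B_{τ⌢1} ∩ f⁻¹[F_{n+1}] = ∅ for τ ∈ 2^n; (3) for each s ∈ 2^ω the set ⋂_n B_{s|n} ∩ f⁻¹({t}) is nonempty. Then the fiber f⁻¹({t}) admits a continuous surjection onto 2^ω, and hence is not scattered. -/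
open Set

/-- A subset `S` of a topological space is scattered if every nonempty subset of `S`
has a point which is relatively isolated in it. -/
def IsScatteredSet {K : Type*} [TopologicalSpace K] (S : Set K) : Prop :=
  ∀ T ⊆ S, T.Nonempty → ∃ x ∈ T, ∃ U : Set K, IsOpen U ∧ U ∩ T = {x}

/-- The initial segment `s|n` of `s ∈ 2^ω`, as a finite binary sequence. -/
def restrictSeq (s : ℕ → Bool) (n : ℕ) : List Bool := List.ofFn (fun i : Fin n => s i)

open Classical in
/-- The sequence of finite approximations used to define the map to `2^ω`. -/
noncomputable def seqL {K : Type*} (B : List Bool → Set K) (x : K) : ℕ → List Bool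
  | 0 => []
  | n + 1 => seqL B x n ++ [if x ∈ B (seqL B x n ++ [true]) then true else false]

open Classical in
/-- The map `K → 2^ω`. -/
noncomputable def gmap {K : Type*} (B : List Bool → Set K) (x : K) : ℕ → Bool :=
  fun n => if x ∈ B (seqL B x n ++ [true]) then true else false

lemma seqL_succ {K : Type*} (B : List Bool → Set K) (x : K) (n : ℕ) :
    seqL B x (n + 1) = seqL B x n ++ [gmap B x n] := rfl

lemma restrictSeq_zero (s : ℕ → Bool) : restrictSeq s 0 = [] := rfl

lemma restrictSeq_succ (s : ℕ → Bool) (n : ℕ) :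
    restrictSeq s (n + 1) = restrictSeq s n ++ [s n] := by
  simp only [restrictSeq, List.ofFn_succ', List.concat_eq_append, Fin.coe_castSucc,
    Fin.val_last]

lemma restrictSeq_length (s : ℕ → Bool) (n : ℕ) : (restrictSeq s n).length = n := by
  simp [restrictSeq]

lemma seqL_locallyConstant {K : Type*} [TopologicalSpace K] (B : List Bool → Set K)
    (hB : ∀ τ, IsClopen (B τ)) (n : ℕ) :
    IsLocallyConstant (fun x => seqL B x n) := by
  classical
  induction n with
  | zero => exact IsLocallyConstant.const []
  | succ n ih =>
    rw [IsLocallyConstant.iff_exists_open] at ih ⊢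
    intro x
    obtain ⟨U, hU, hxU, hUc⟩ := ih x
    by_cases hx : x ∈ B (seqL B x n ++ [true])
    · refine ⟨U ∩ B (seqL B x n ++ [true]), hU.inter (hB _).2, ⟨hxU, hx⟩, ?_⟩
      rintro y ⟨hyU, hyB⟩
      have h1 := hUc y hyU
      simp only [seqL_succ, gmap, h1]
      rw [if_pos (h1 ▸ hyB), if_pos hx]
    · refine ⟨U ∩ (B (seqL B x n ++ [true]))ᶜ, hU.inter (hB _).1.isOpen_compl, ⟨hxU, hx⟩, ?_⟩
      rintro y ⟨hyU, hyB⟩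
      have h1 := hUc y hyU
      simp only [seqL_succ, gmap, h1]
      rw [if_neg (h1 ▸ hyB), if_neg hx]

lemma gmap_locallyConstant {K : Type*} [TopologicalSpace K] (B : List Bool → Set K)
    (hB : ∀ τ, IsClopen (B τ)) (n : ℕ) :
    IsLocallyConstant (fun x => gmap B x n) := by
  classical
  have h := seqL_locallyConstant B hB n
  rw [IsLocallyConstant.iff_exists_open] at h ⊢
  intro x
  obtain ⟨U, hU, hxU, hUc⟩ := h x
  by_cases hx : x ∈ B (seqL B x n ++ [true])
  · refine ⟨U ∩ B (seqL B x n ++ [true]), hU.inter (hB _).2, ⟨hxU, hx⟩, ?_⟩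
    rintro y ⟨hyU, hyB⟩
    have h1 := hUc y hyU
    simp only [gmap, h1]
    rw [if_pos (h1 ▸ hyB), if_pos hx]
  · refine ⟨U ∩ (B (seqL B x n ++ [true]))ᶜ, hU.inter (hB _).1.isOpen_compl, ⟨hxU, hx⟩, ?_⟩
    rintro y ⟨hyU, hyB⟩
    have h1 := hUc y hyU
    simp only [gmap, h1]
    rw [if_neg (h1 ▸ hyB), if_neg hx]

lemma gmap_continuous {K : Type*} [TopologicalSpace K] (B : List Bool → Set K)
    (hB : ∀ τ, IsClopen (B τ)) : Continuous (gmap B) :=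
  continuous_pi fun n => (gmap_locallyConstant B hB n).continuous

/-- The Cantor space has no isolated points. -/
lemma cantor_no_isolated (V : Set (ℕ → Bool)) (hV : IsOpen V) (s : ℕ → Bool) (hs : s ∈ V) :
    ∃ s' ∈ V, s' ≠ s := by
  set xk : ℕ → (ℕ → Bool) := fun k n => if n = k then !s n else s n with hxk
  have htend : Filter.Tendsto xk Filter.atTop (nhds s) := by
    rw [tendsto_pi_nhds]
    intro n
    apply Filter.Tendsto.congr' (f₁ := fun _ => s n)
    · filter_upwards [Filter.eventually_ge_atTop (n + 1)] with k hk
      simp only [hxk]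
      rw [if_neg (by omega)]
    · exact tendsto_const_nhds
  have := htend.eventually (hV.mem_nhds hs)
  obtain ⟨k, hk⟩ := this.exists
  refine ⟨xk k, hk, ?_⟩
  intro h
  have := congrFun h k
  simp only [hxk, if_pos rfl] at this
  exact (Bool.not_ne_self (s k)) this

theorem stmt16 {K : Type*} [TopologicalSpace K] [CompactSpace K] [T2Space K]
    [TotallyDisconnectedSpace K]
    (f : K → (ℕ → Bool)) (hf : Continuous f)
    (B : List Bool → Set K) (hB : ∀ τ, IsClopen (B τ))
    (F : ℕ → Set (ℕ → Bool)) (hFc : ∀ n, IsClosed (F n))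
    (hFdec : ∀ n, F (n + 1) ⊆ F n)
    (t : ℕ → Bool) (hFt : ⋂ n, F n = {t})
    -- `diam (F n) → 0`: the `F n` shrink to `t`
    (hdiam : ∀ U : Set (ℕ → Bool), IsOpen U → t ∈ U → ∃ N, ∀ n ≥ N, F n ⊆ U)
    -- (1)
    (h1 : ∀ (n : ℕ) (τ : List Bool), τ.length = n → ∀ σ : List Bool, σ <+: τ →
      B τ ∩ f ⁻¹' F n ⊆ B σ ∩ f ⁻¹' F n)
    -- (2)
    (h2 : ∀ (n : ℕ) (τ : List Bool), τ.length = n →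
      B (τ ++ [false]) ∩ B (τ ++ [true]) ∩ f ⁻¹' F (n + 1) = ∅)
    -- (3)
    (h3 : ∀ s : ℕ → Bool, ((⋂ n, B (restrictSeq s n)) ∩ f ⁻¹' {t}).Nonempty) :
    (∃ g : (f ⁻¹' {t}) → (ℕ → Bool), Continuous g ∧ Function.Surjective g) ∧
      ¬ IsScatteredSet (f ⁻¹' {t}) := by
  classical
  have htF : ∀ n, t ∈ F n := by
    intro n
    have : t ∈ ⋂ n, F n := by rw [hFt]; exact rfl
    exact mem_iInter.1 this n
  -- key surjectivity fact: every point of `⋂ B(s|n) ∩ f⁻¹{t}` maps to `s` under `gmap B`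
  have key : ∀ (s : ℕ → Bool) (x : K), x ∈ (⋂ n, B (restrictSeq s n)) ∩ f ⁻¹' {t} →
      gmap B x = s := by
    intro s x ⟨hxB, hxf⟩
    have hxB' : ∀ n, x ∈ B (restrictSeq s n) := mem_iInter.1 hxB
    have hfx : f x = t := hxf
    have main : ∀ n, seqL B x n = restrictSeq s n := by
      intro n
      induction n with
      | zero => rfl
      | succ n ih =>
        rw [seqL_succ, ih, restrictSeq_succ]
        congr 1
        have hxn1 : x ∈ B (restrictSeq s n ++ [s n]) := by
          have := hxB' (n + 1); rwa [restrictSeq_succ] at this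
        cases hsn : s n with
        | true => simp only [gmap, ih]; rw [if_pos (hsn ▸ hxn1)]
        | false =>
          simp only [gmap, ih]
          rw [if_neg]
          intro hxt
          have hempty := h2 n (restrictSeq s n) (restrictSeq_length s n)
          have : x ∈ B (restrictSeq s n ++ [false]) ∩ B (restrictSeq s n ++ [true])
              ∩ f ⁻¹' F (n + 1) := ⟨⟨hsn ▸ hxn1, hxt⟩, by simp [hfx, htF (n+1)]⟩
          rw [hempty] at this
          exact this
    funext n
    have hxn1 : x ∈ B (restrictSeq s n ++ [s n]) := by
      have := hxB' (n + 1); rwa [restrictSeq_succ] at this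
    cases hsn : s n with
    | true => simp only [gmap, main n]; rw [if_pos (hsn ▸ hxn1)]
    | false =>
      simp only [gmap, main n]
      rw [if_neg]
      intro hxt
      have hempty := h2 n (restrictSeq s n) (restrictSeq_length s n)
      have : x ∈ B (restrictSeq s n ++ [false]) ∩ B (restrictSeq s n ++ [true])
          ∩ f ⁻¹' F (n + 1) := ⟨⟨hsn ▸ hxn1, hxt⟩, by simp [hfx, htF (n+1)]⟩
      rw [hempty] at this
      exact this
  have hgc : Continuous (gmap B) := gmap_continuous B hB
  have hsurj : ∀ s : ℕ → Bool, ∃ x ∈ f ⁻¹' {t}, gmap B x = s := by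
    intro s
    obtain ⟨x, hx⟩ := h3 s
    exact ⟨x, hx.2, key s x hx⟩
  constructor
  · refine ⟨fun x => gmap B x.1, hgc.comp continuous_subtype_val, ?_⟩
    intro s
    obtain ⟨x, hx, hgx⟩ := hsurj s
    exact ⟨⟨x, hx⟩, hgx⟩
  · -- non-scattered, via a minimal closed subset mapping onto 2^ω
    intro hsc
    set S : Set (Set K) := {T | T ⊆ f ⁻¹' {t} ∧ IsClosed T ∧ ∀ s : ℕ → Bool, ∃ x ∈ T, gmap B x = s}
      with hS
    have hfiber_mem : f ⁻¹' {t} ∈ S :=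
      ⟨Subset.rfl, isClosed_singleton.preimage hf, hsurj⟩
    obtain ⟨T, hTsub, hTmin⟩ := zorn_superset_nonempty S (fun c hcS hchain hcne => by
      obtain ⟨T0, hT0⟩ := hcne
      refine ⟨⋂ T ∈ c, T, ⟨?_, ?_, ?_⟩, fun T hT => biInter_subset_of_mem hT⟩
      · exact (biInter_subset_of_mem hT0).trans (hcS hT0).1
      · exact isClosed_biInter fun T hT => (hcS hT).2.1
      · intro s
        have : (⋂ T : c, ((T : Set K) ∩ gmap B ⁻¹' {s})).Nonempty := by
          haveI : Nonempty c := ⟨⟨T0, hT0⟩⟩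
          apply IsCompact.nonempty_iInter_of_directed_nonempty_isCompact_isClosed
          · rintro ⟨T1, hT1⟩ ⟨T2, hT2⟩
            rcases hchain.total hT1 hT2 with h | h
            · exact ⟨⟨T1, hT1⟩, Subset.rfl, inter_subset_inter_left _ h⟩
            · exact ⟨⟨T2, hT2⟩, inter_subset_inter_left _ h, Subset.rfl⟩
          · rintro ⟨T1, hT1⟩
            obtain ⟨x, hx, hgx⟩ := (hcS hT1).2.2 s
            exact ⟨x, hx, hgx⟩
          · rintro ⟨T1, hT1⟩
            exact ((hcS hT1).2.1.inter (isClosed_singleton.preimage hgc)).isCompact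
          · rintro ⟨T1, hT1⟩
            exact (hcS hT1).2.1.inter (isClosed_singleton.preimage hgc)
        obtain ⟨x, hx⟩ := this
        refine ⟨x, ?_, ?_⟩
        · rw [mem_iInter₂]
          intro T hT
          exact (mem_iInter.1 hx ⟨T, hT⟩).1
        · exact (mem_iInter.1 hx ⟨T0, hT0⟩).2
      ) _ hfiber_mem
    obtain ⟨hTfib, hTcl, hTsurj⟩ := hTmin.prop
    -- T is nonempty
    obtain ⟨x0, hx0, _⟩ := hTsurj (fun _ => true)
    -- scatteredness gives an isolated point of T
    obtain ⟨x, hxT, U, hU, hUT⟩ := hsc T hTfib ⟨x0, hx0⟩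
    set T' : Set K := T \ U with hT'
    have hT'cl : IsClosed T' := hTcl.sdiff hU
    have hxU : x ∈ U := by
      have : x ∈ U ∩ T := by rw [hUT]; exact rfl
      exact this.1
    have hxT' : x ∉ T' := fun h => h.2 hxU
    have hT'sub : T' ⊂ T := ⟨diff_subset, fun h => hxT' (h hxT)⟩
    -- T' cannot be in S by minimality
    have hT'notS : T' ∉ S := by
      intro hmem
      exact hT'sub.ne (hTmin.eq_of_subset hmem hT'sub.subset)
    have : ∃ s : ℕ → Bool, ¬ ∃ y ∈ T', gmap B y = s := by
      by_contra h
      push_neg at h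
      exact hT'notS ⟨diff_subset.trans hTfib, hT'cl, h⟩
    obtain ⟨s, hs⟩ := this
    -- the image of T' is closed; s is in its open complement
    have himcl : IsClosed (gmap B '' T') :=
      (hT'cl.isCompact.image hgc).isClosed
    have hsV : s ∈ (gmap B '' T')ᶜ := by
      intro ⟨y, hy, hgy⟩
      exact hs ⟨y, hy, hgy⟩
    obtain ⟨s', hs'V, hs'ne⟩ := cantor_no_isolated _ himcl.isOpen_compl s hsV
    -- points of T mapping outside gmap '' T' must be x
    have unique : ∀ (u : ℕ → Bool), u ∉ gmap B '' T' → ∀ y ∈ T, gmap B y = u → y = x := by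
      intro u hu y hyT hgy
      by_contra hne
      have hyT' : y ∈ T' := by
        refine ⟨hyT, fun hyU => hne ?_⟩
        have : y ∈ U ∩ T := ⟨hyU, hyT⟩
        rw [hUT] at this
        exact this
      exact hu ⟨y, hyT', hgy⟩
    obtain ⟨y1, hy1T, hgy1⟩ := hTsurj s
    obtain ⟨y2, hy2T, hgy2⟩ := hTsurj s'
    have e1 : y1 = x := unique s hsV y1 hy1T hgy1
    have e2 : y2 = x := unique s' hs'V y2 hy2T hgy2
    apply hs'ne
    rw [← hgy2, e2, ← e1, hgy1]
end
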